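/- arXiv:2506.03612 — 2 statements merged into one kernel-verified Lean document; each statement's English description precedes it below -/
import Mathlib

section
/- Let G be a connected AT-free graph with nonadjacent vertices s,t, A ⊆ V(G)∖{s,t}, and assume: every a ∈ A has an s,a-path in G avoiding N_G[t] and an a,t-path in G avoiding N_G[s]. Let S_1 be a minimal sA,t-separator (separating {s}∪A from t) of G, let C_s and C_t be the components of G−S_1 containing s and t, and let Q_s := N_G(C_s) ∩ N_G(C_t). Then Q_s is a minimal s,t-separator of G, and for every a ∈ A with a ∉ C_s it holds that Q_s ⊆ N_G(a). -/
variable {V : Type*}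

/-- Reachability in `G` by a walk avoiding the vertex set `S`. -/
def ReachAvoid (G : SimpleGraph V) (S : Set V) (u v : V) : Prop :=
  ∃ w : G.Walk u v, ∀ x ∈ w.support, x ∉ S

/-- The connected component of `G − S` containing `s`, as a subset of `V`. -/
def compOf (G : SimpleGraph V) (S : Set V) (s : V) : Set V :=
  {v | ReachAvoid G S s v}

/-- `S` is an `s,t`-separator of `G`. -/
def IsSep (G : SimpleGraph V) (s t : V) (S : Set V) : Prop :=
  s ∉ S ∧ t ∉ S ∧ ¬ ReachAvoid G S s t

/-- `S` is a minimal `s,t`-separator of `G`. -/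
def IsMinSep (G : SimpleGraph V) (s t : V) (S : Set V) : Prop :=
  IsSep G s t S ∧ ∀ S' ⊂ S, ¬ IsSep G s t S'

/-- The open neighborhood of a vertex set `X`. -/
def nbhd (G : SimpleGraph V) (X : Set V) : Set V :=
  {v | v ∉ X ∧ ∃ x ∈ X, G.Adj x v}

/-- The closed neighborhood of a vertex `v`. -/
def clNbhd (G : SimpleGraph V) (v : V) : Set V :=
  insert v (G.neighborSet v)

/-- `S` is a minimal `s,t`-separator close to `sA`. -/
def CloseTo (G : SimpleGraph V) (s t : V) (A : Set V) (S : Set V) : Prop :=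
  IsMinSep G s t S ∧ A ⊆ compOf G S s ∧
    ∀ T, IsMinSep G s t T → T ≠ S → A ⊆ compOf G T s →
      ¬ compOf G T s ⊆ compOf G S s

/-- `G` contains no asteroidal triple. -/
def IsATFree (G : SimpleGraph V) : Prop :=
  ¬ ∃ a b c : V, a ≠ b ∧ a ≠ c ∧ b ≠ c ∧
    ¬ G.Adj a b ∧ ¬ G.Adj a c ∧ ¬ G.Adj b c ∧
    (∃ w : G.Walk a b, ∀ x ∈ w.support, x ∉ clNbhd G c) ∧
    (∃ w : G.Walk a c, ∀ x ∈ w.support, x ∉ clNbhd G b) ∧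
    (∃ w : G.Walk b c, ∀ x ∈ w.support, x ∉ clNbhd G a)

/-- `S` is an `A,B`-separator. -/
def IsABSep (G : SimpleGraph V) (A B : Set V) (S : Set V) : Prop :=
  S ⊆ (A ∪ B)ᶜ ∧ ∀ a ∈ A, ∀ b ∈ B, ¬ ReachAvoid G S a b

/-- `S` is a minimal `A,B`-separator. -/
def IsMinABSep (G : SimpleGraph V) (A B S : Set V) : Prop :=
  IsABSep G A B S ∧ ∀ S' ⊂ S, ¬ IsABSep G A B S'

/-- `S` is a safe (connectivity-preserving) `A,B`-separator: removing `S`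
leaves two distinct components, one containing `A` and one containing `B`. -/
def IsSafeSep (G : SimpleGraph V) (A B S : Set V) : Prop :=
  S ⊆ (A ∪ B)ᶜ ∧ ∃ a b : V, a ∉ S ∧ b ∉ S ∧
    A ⊆ compOf G S a ∧ B ⊆ compOf G S b ∧
    Disjoint (compOf G S a) (compOf G S b)

/-- The induced subgraph on `X` is connected (any two vertices of `X` are joined
by a walk staying in `X`). -/
def ConnIn (G : SimpleGraph V) (X : Set V) : Prop :=
  ∀ x ∈ X, ∀ y ∈ X, ∃ w : G.Walk x y, ∀ z ∈ w.support, z ∈ X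

/-- The graph obtained from `G` by contracting `{s} ∪ A` to the vertex `s`
(the vertices of `A` become isolated). -/
def contractGraph (G : SimpleGraph V) (s : V) (A : Set V) : SimpleGraph V where
  Adj u v := u ∉ A ∧ v ∉ A ∧ u ≠ v ∧
    (G.Adj u v ∨ (u = s ∧ ∃ a ∈ A, G.Adj a v) ∨ (v = s ∧ ∃ a ∈ A, G.Adj a u))
  symm := by
    constructor
    rintro u v ⟨hu, hv, hne, h⟩
    refine ⟨hv, hu, hne.symm, ?_⟩
    rcases h with h | h | h
    · exact Or.inl h.symm
    · exact Or.inr (Or.inr h)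
    · exact Or.inr (Or.inl h)
  loopless := by
    constructor
    rintro u ⟨_, _, hne, _⟩
    exact hne rfl

/-- The graph obtained from `G` by adding all edges from `s` to `N_G[A]`. -/
def addApex (G : SimpleGraph V) (s : V) (A : Set V) : SimpleGraph V where
  Adj u v := G.Adj u v ∨
    (u = s ∧ v ≠ s ∧ v ∈ A ∪ nbhd G A) ∨
    (v = s ∧ u ≠ s ∧ u ∈ A ∪ nbhd G A)
  symm := by
    constructor
    rintro u v (h | h | h)
    · exact Or.inl h.symm
    · exact Or.inr (Or.inr h)
    · exact Or.inr (Or.inl h)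
  loopless := by
    constructor
    rintro u (h | ⟨h1, h2, _⟩ | ⟨h1, h2, _⟩)
    · exact G.loopless.irrefl u h
    · exact h2 h1
    · exact h2 h1

/-- The graph obtained from `G` by subdividing every edge. -/
def subdiv (G : SimpleGraph V) : SimpleGraph (V ⊕ G.edgeSet) where
  Adj x y :=
    match x, y with
    | Sum.inl u, Sum.inr e => u ∈ (e : Sym2 V)
    | Sum.inr e, Sum.inl u => u ∈ (e : Sym2 V)
    | _, _ => False
  symm := by
    constructor
    rintro (u | e) (v | f) h <;> exact h
  loopless := by
    constructor
    rintro (u | e) h <;> exact h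

/-- The instance `2Dis(G,A,B)` of 2-Disjoint-Connected-Subgraphs has a solution. -/
def TwoDisSolvable (G : SimpleGraph V) (A B : Set V) : Prop :=
  ∃ A₁ B₁ : Set V, Disjoint A₁ B₁ ∧ A ⊆ A₁ ∧ B ⊆ B₁ ∧
    ConnIn G A₁ ∧ ConnIn G B₁



/-!
Minimality of `S₁` gives every vertex of `S₁` a neighbour in `C_t`, so
`N(C_s) ⊆ S₁ ⊆ N(C_t)`. Hence every vertex `v` of `Q_s = N(C_s) ∩ N(C_t)` lies on an
`s,t`-path inside `C_s ∪ {v} ∪ C_t`, which makes `Q_s` a minimal `s,t`-separator.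
If `a ∈ A` lies outside `C_s` (hence outside `S₁ ∪ C_t`), no vertex of `C_s ∪ C_t` is in
`N[a]`; so a vertex `v ∈ Q_s` not adjacent to `a` gives an `s,t`-path avoiding `N[a]`,
and together with the two given paths `s, a, t` would be an asteroidal triple.
-/

section

open SimpleGraph

variable {G : SimpleGraph V}

lemma mem_clNbhd {v x : V} : x ∈ clNbhd G v ↔ x = v ∨ G.Adj v x := Iff.rfl

lemma IsATFree.not_avoiding_walks (hat : IsATFree G) {a b c : V}
    (hab : ∃ w : G.Walk a b, ∀ x ∈ w.support, x ∉ clNbhd G c)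
    (hac : ∃ w : G.Walk a c, ∀ x ∈ w.support, x ∉ clNbhd G b)
    (hbc : ∃ w : G.Walk b c, ∀ x ∈ w.support, x ∉ clNbhd G a) : False := by
  obtain ⟨wab, hwab⟩ := hab
  obtain ⟨wac, hwac⟩ := hac
  have ha_c := hwab a wab.start_mem_support
  have hb_c := hwab b wab.end_mem_support
  have ha_b := hwac a wac.start_mem_support
  simp only [mem_clNbhd, not_or] at ha_c hb_c ha_b
  exact hat ⟨a, b, c, ha_b.1, ha_c.1, hb_c.1, fun h => ha_b.2 h.symm,
    fun h => ha_c.2 h.symm, fun h => hb_c.2 h.symm, ⟨wab, hwab⟩, ⟨wac, hwac⟩, hbc⟩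

lemma ReachAvoid.symm {S : Set V} {u v : V} (h : ReachAvoid G S u v) : ReachAvoid G S v u := by
  obtain ⟨w, hw⟩ := h
  exact ⟨w.reverse, fun x hx => hw x (by simpa using hx)⟩

section compOf

variable {S : Set V} {s : V}

lemma mem_compOf_self (hs : s ∉ S) : s ∈ compOf G S s :=
  ⟨Walk.nil, by simpa using hs⟩

lemma mem_compOf_of_adj {u v : V} (hu : u ∈ compOf G S s) (huv : G.Adj u v) (hv : v ∉ S) :
    v ∈ compOf G S s := by
  obtain ⟨w, hw⟩ := hu
  refine ⟨w.concat huv, fun x hx => ?_⟩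
  rw [Walk.support_concat, List.mem_append, List.mem_singleton] at hx
  rcases hx with hx | rfl
  exacts [hw x hx, hv]

lemma nbhd_compOf_subset : nbhd G (compOf G S s) ⊆ S := by
  rintro v ⟨hvC, u, hu, huv⟩
  by_contra hv
  exact hvC (mem_compOf_of_adj hu huv hv)

lemma notMem_clNbhd_of_mem_compOf {a v : V} (ha : a ∉ S) (haC : a ∉ compOf G S s)
    (hv : v ∈ compOf G S s) : v ∉ clNbhd G a := by
  rintro (rfl | hav)
  exacts [haC hv, haC (mem_compOf_of_adj hv hav.symm ha)]

lemma exists_walk_subset_compOf {v : V} (hv : v ∈ compOf G S s) :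
    ∃ w : G.Walk s v, ∀ z ∈ w.support, z ∈ compOf G S s := by
  classical
  obtain ⟨w, hw⟩ := hv
  exact ⟨w, fun z hz => ⟨w.takeUntil z hz,
    fun x hx => hw x (w.support_takeUntil_subset_support hz hx)⟩⟩

lemma SimpleGraph.Walk.exists_mem_support_mem_nbhd {C : Set V} {u v : V} (w : G.Walk u v)
    (hu : u ∈ C) (hv : v ∉ C) : ∃ z ∈ w.support, z ∈ nbhd G C := by
  obtain ⟨d, hd, hfst, hsnd⟩ := w.exists_boundary_dart C hu hv
  exact ⟨d.snd, w.dart_snd_mem_support_of_mem_darts hd, hsnd, d.fst, hfst, d.adj⟩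

lemma mem_compOf_or_mem_nbhd_of_reachAvoid_diff {v x : V} (hs : s ∉ S)
    (h : ReachAvoid G (S \ {v}) s x) : x ∈ compOf G S s ∨ v ∈ nbhd G (compOf G S s) := by
  by_contra! hx
  obtain ⟨w, hw⟩ := h
  obtain ⟨z, hz, hzN⟩ := w.exists_mem_support_mem_nbhd (mem_compOf_self hs) hx.1
  have hzv : z = v := by
    by_contra hzv
    exact hw z hz ⟨nbhd_compOf_subset hzN, hzv⟩
  exact hx.2 (hzv ▸ hzN)

lemma exists_walk_of_mem_nbhd_inter {t v : V}
    (hv : v ∈ nbhd G (compOf G S s) ∩ nbhd G (compOf G S t)) :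
    ∃ w : G.Walk s t, ∀ z ∈ w.support,
      z ∈ compOf G S s ∨ z = v ∨ z ∈ compOf G S t := by
  obtain ⟨⟨-, cs, hcs, hcsv⟩, ⟨-, ct, hct, hctv⟩⟩ := hv
  obtain ⟨ws, hws⟩ := exists_walk_subset_compOf hcs
  obtain ⟨wt, hwt⟩ := exists_walk_subset_compOf hct
  refine ⟨ws.append (Walk.cons hcsv (Walk.cons hctv.symm wt.reverse)), fun z hz => ?_⟩
  simp only [Walk.mem_support_append_iff, Walk.support_cons, Walk.support_reverse,
    List.mem_cons, List.mem_reverse] at hz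
  rcases hz with hz | rfl | rfl | hz
  · exact Or.inl (hws z hz)
  · exact Or.inl hcs
  · exact Or.inr (Or.inl rfl)
  · exact Or.inr (Or.inr (hwt z hz))

end compOf

lemma IsMinABSep.subset_nbhd_compOf {A S : Set V} {t : V} (h : IsMinABSep G A {t} S) :
    S ⊆ nbhd G (compOf G S t) := by
  intro v hv
  have ht : t ∉ S := fun htS => h.1.1 htS (Or.inr rfl)
  have hnot := h.2 (S \ {v}) (Set.sdiff_singleton_ssubset.mpr hv)
  simp only [IsABSep, Set.mem_singleton_iff, forall_eq, not_and_or, not_forall,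
    not_not] at hnot
  rcases hnot with hsub | ⟨a, ha, hreach⟩
  · exact absurd (Set.sdiff_subset.trans h.1.1) hsub
  · refine (mem_compOf_or_mem_nbhd_of_reachAvoid_diff ht hreach.symm).resolve_left ?_
    exact fun haC => h.1.2 a ha t rfl haC.symm

/-- `C_s` and `C_t` are full components of `N(C_s) ∩ N(C_t)`. -/
lemma isMinSep_nbhd_inter {S : Set V} {s t : V} (hs : s ∉ S) (hst : t ∉ compOf G S s)
    (hsub : nbhd G (compOf G S s) ⊆ nbhd G (compOf G S t)) :
    IsMinSep G s t (nbhd G (compOf G S s) ∩ nbhd G (compOf G S t)) := by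
  have hsQ : s ∉ nbhd G (compOf G S s) ∩ nbhd G (compOf G S t) :=
    fun h => h.1.1 (mem_compOf_self hs)
  have htQ : t ∉ nbhd G (compOf G S s) ∩ nbhd G (compOf G S t) := by
    rintro ⟨-, htC, x, ⟨w, hw⟩, -⟩
    exact htC (mem_compOf_self (hw t w.start_mem_support))
  refine ⟨⟨hsQ, htQ, ?_⟩, fun S' hS' hsep => ?_⟩
  · rintro ⟨w, hw⟩
    obtain ⟨z, hz, hzN⟩ := w.exists_mem_support_mem_nbhd (mem_compOf_self hs) hst
    exact hw z hz ⟨hzN, hsub hzN⟩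
  · obtain ⟨v, hvQ, hvS'⟩ := Set.exists_of_ssubset hS'
    obtain ⟨w, hw⟩ := exists_walk_of_mem_nbhd_inter hvQ
    refine hsep.2.2 ⟨w, fun z hz hzS' => ?_⟩
    have hzQ := hS'.1 hzS'
    rcases hw z hz with hzC | rfl | hzC
    exacts [hzQ.1.1 hzC, hvS' hzS', hzQ.2.1 hzC]

lemma IsATFree.nbhd_inter_subset_neighborSet (hat : IsATFree G) {S : Set V} {s t a : V}
    (ha : a ∉ S) (haCs : a ∉ compOf G S s) (haCt : a ∉ compOf G S t)
    (hwalk_sa : ∃ w : G.Walk s a, ∀ x ∈ w.support, x ∉ clNbhd G t)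
    (hwalk_at : ∃ w : G.Walk a t, ∀ x ∈ w.support, x ∉ clNbhd G s) :
    nbhd G (compOf G S s) ∩ nbhd G (compOf G S t) ⊆ G.neighborSet a := by
  intro v hvQ
  by_contra hav
  have hva : v ≠ a := by
    rintro rfl
    obtain ⟨-, u, hu, huv⟩ := hvQ.1
    exact haCs (mem_compOf_of_adj hu huv ha)
  obtain ⟨w, hw⟩ := exists_walk_of_mem_nbhd_inter hvQ
  refine hat.not_avoiding_walks hwalk_sa ⟨w, fun z hz => ?_⟩ hwalk_at
  rcases hw z hz with hzC | rfl | hzC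
  · exact notMem_clNbhd_of_mem_compOf ha haCs hzC
  · rintro (h | h)
    exacts [hva h, hav h]
  · exact notMem_clNbhd_of_mem_compOf ha haCt hzC

end

theorem stmt14_general (G : SimpleGraph V) (hat : IsATFree G)
    (s t : V) (A : Set V)
    (hpath1 : ∀ a ∈ A, ∃ w : G.Walk s a, ∀ x ∈ w.support, x ∉ clNbhd G t)
    (hpath2 : ∀ a ∈ A, ∃ w : G.Walk a t, ∀ x ∈ w.support, x ∉ clNbhd G s)
    (S₁ : Set V) (hS₁ : IsMinABSep G (insert s A) {t} S₁) :
    IsMinSep G s t (nbhd G (compOf G S₁ s) ∩ nbhd G (compOf G S₁ t)) ∧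
    ∀ a ∈ A, a ∉ compOf G S₁ s →
      nbhd G (compOf G S₁ s) ∩ nbhd G (compOf G S₁ t) ⊆ G.neighborSet a := by
  have hS₁sub : S₁ ⊆ (insert s A ∪ {t})ᶜ := hS₁.1.1
  have hsep : ∀ x ∈ insert s A, ¬ ReachAvoid G S₁ x t := fun x hx => hS₁.1.2 x hx t rfl
  refine ⟨isMinSep_nbhd_inter (fun hs => hS₁sub hs (Or.inl (Set.mem_insert s A)))
    (hsep s (Set.mem_insert s A)) (nbhd_compOf_subset.trans hS₁.subset_nbhd_compOf), ?_⟩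
  intro a ha haCs
  have haA : a ∈ insert s A := Set.mem_insert_of_mem s ha
  exact hat.nbhd_inter_subset_neighborSet (fun haS => hS₁sub haS (Or.inl haA)) haCs
    (fun haCt => hsep a haA haCt.symm) (hpath1 a ha) (hpath2 a ha)

theorem stmt14 (G : SimpleGraph V) (hconn : G.Connected) (hat : IsATFree G)
    (s t : V) (hst : s ≠ t) (hadj : ¬ G.Adj s t)
    (A : Set V) (hsA : s ∉ A) (htA : t ∉ A)
    (hpath1 : ∀ a ∈ A, ∃ w : G.Walk s a, ∀ x ∈ w.support, x ∉ clNbhd G t)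
    (hpath2 : ∀ a ∈ A, ∃ w : G.Walk a t, ∀ x ∈ w.support, x ∉ clNbhd G s)
    (S₁ : Set V) (hS₁ : IsMinABSep G (insert s A) {t} S₁) :
    IsMinSep G s t (nbhd G (compOf G S₁ s) ∩ nbhd G (compOf G S₁ t)) ∧
    ∀ a ∈ A, a ∉ compOf G S₁ s →
      nbhd G (compOf G S₁ s) ∩ nbhd G (compOf G S₁ t) ⊆ G.neighborSet a :=
  stmt14_general G hat s t A hpath1 hpath2 S₁ hS₁
end

section
/- Let G be an undirected graph and let s_1,t_1,s_2,t_2 be four distinct vertices with {s_1,t_1} and {s_2,t_2} nonadjacent vertex pairs (no edge between the two sets). Then G contains two mutually induced paths P_1 (from s_1 to t_1) and P_2 (from s_2 to t_2) if and only if G has a safe {s_1,t_1},{s_2,t_2}-separator. -/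
variable {V : Type*}

/-! If `P₁` and `P₂` are mutually induced, the open neighbourhood of `V(P₁)` is a safe separator:
the component of `s₁` in its complement stays inside `V(P₁)`, while `P₂` avoids it entirely.
Conversely, paths inside the two components of a safe separator are mutually induced, because
an edge between them would merge the components. -/

namespace ReachAvoid

variable {G : SimpleGraph V} {S : Set V} {u v w : V}

lemma notMem_right (h : ReachAvoid G S u v) : v ∉ S := by
  obtain ⟨p, hp⟩ := h
  exact hp v p.end_mem_support

lemma symm_s18 (h : ReachAvoid G S u v) : ReachAvoid G S v u := by
  obtain ⟨p, hp⟩ := h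
  exact ⟨p.reverse, by simpa using hp⟩

lemma trans (h₁ : ReachAvoid G S u v) (h₂ : ReachAvoid G S v w) : ReachAvoid G S u w := by
  obtain ⟨p, hp⟩ := h₁
  obtain ⟨q, hq⟩ := h₂
  refine ⟨p.append q, fun x hx => ?_⟩
  rw [SimpleGraph.Walk.mem_support_append_iff] at hx
  exact hx.elim (hp x) (hq x)

lemma of_mem_support (p : G.Walk u v) (hp : ∀ x ∈ p.support, x ∉ S) {x : V}
    (hx : x ∈ p.support) : ReachAvoid G S u x := by
  classical
  exact ⟨p.takeUntil x hx, fun y hy => hp y (p.support_takeUntil_subset_support hx hy)⟩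

lemma of_adj (h : ReachAvoid G S u v) (hadj : G.Adj v w) (hw : w ∉ S) :
    ReachAvoid G S u w :=
  h.trans (of_mem_support (.cons hadj .nil)
    (by simpa [SimpleGraph.Walk.support_cons] using ⟨h.notMem_right, hw⟩) (by simp))

end ReachAvoid

section

variable {G : SimpleGraph V}

lemma compOf_nbhd_subset {X : Set V} {x : V} (hx : x ∈ X) : compOf G (nbhd G X) x ⊆ X := by
  rintro v ⟨p, hp⟩
  induction p with
  | nil => exact hx
  | cons hadj p ih =>
    refine ih ?_ fun z hz => hp z (by simp [hz])
    by_contra hy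
    exact hp _ (by simp) ⟨hy, _, hx, hadj⟩

lemma exists_isPath_of_mem_compOf {S : Set V} {a u v : V} (hu : u ∈ compOf G S a)
    (hv : v ∈ compOf G S a) :
    ∃ p : G.Walk u v, p.IsPath ∧ ∀ x ∈ p.support, x ∈ compOf G S a := by
  classical
  obtain ⟨p, hp⟩ := ReachAvoid.trans (ReachAvoid.symm_s18 hu) hv
  exact ⟨p.bypass, p.bypass_isPath, fun x hx => ReachAvoid.trans hu <|
    .of_mem_support p.bypass (fun y hy => hp y (p.support_bypass_subset_support hy)) hx⟩

lemma ne_and_not_adj_of_disjoint_compOf {S : Set V} {a b x y : V}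
    (hdisj : Disjoint (compOf G S a) (compOf G S b)) (hx : x ∈ compOf G S a)
    (hy : y ∈ compOf G S b) : x ≠ y ∧ ¬ G.Adj x y := by
  refine ⟨hdisj.ne_of_mem hx hy, fun hadj => ?_⟩
  exact hdisj.ne_of_mem (ReachAvoid.of_adj hx hadj (ReachAvoid.notMem_right hy)) hy rfl

lemma isSafeSep_nbhd_support {s₁ t₁ s₂ t₂ : V} (P₁ : G.Walk s₁ t₁) (P₂ : G.Walk s₂ t₂)
    (hP : ∀ x ∈ P₁.support, ∀ y ∈ P₂.support, x ≠ y ∧ ¬ G.Adj x y) :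
    IsSafeSep G {s₁, t₁} {s₂, t₂} (nbhd G {x | x ∈ P₁.support}) := by
  set X : Set V := {x | x ∈ P₁.support}
  have hP₁ : ∀ x ∈ P₁.support, x ∉ nbhd G X := fun x hx hN => hN.1 hx
  have hP₂ : ∀ y ∈ P₂.support, y ∉ nbhd G X := fun y hy ⟨_, x, hx, hadj⟩ =>
    (hP x hx y hy).2 hadj
  have hs₂X : s₂ ∉ X := fun hs₂ => (hP s₂ hs₂ s₂ P₂.start_mem_support).1 rfl
  refine ⟨?_, s₁, s₂, hP₁ s₁ (by simp), hP₂ s₂ (by simp), ?_, ?_, ?_⟩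
  · rintro v hv ((rfl | rfl) | (rfl | rfl))
    exacts [hP₁ v (by simp) hv, hP₁ v (by simp) hv, hP₂ v (by simp) hv, hP₂ v (by simp) hv]
  · rintro x (rfl | rfl) <;> exact .of_mem_support P₁ hP₁ (by simp)
  · rintro y (rfl | rfl) <;> exact .of_mem_support P₂ hP₂ (by simp)
  · refine Set.disjoint_left.mpr fun v hv₁ hv₂ => hs₂X ?_
    have hvX : v ∈ X := compOf_nbhd_subset (X := X) P₁.start_mem_support hv₁
    exact compOf_nbhd_subset hvX (ReachAvoid.symm_s18 hv₂)

end

theorem stmt18_general (G : SimpleGraph V) (s₁ t₁ s₂ t₂ : V) :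
    (∃ (P₁ : G.Walk s₁ t₁) (P₂ : G.Walk s₂ t₂), P₁.IsPath ∧ P₂.IsPath ∧
        ∀ x ∈ P₁.support, ∀ y ∈ P₂.support, x ≠ y ∧ ¬ G.Adj x y) ↔
      ∃ S : Set V, IsSafeSep G {s₁, t₁} {s₂, t₂} S := by
  constructor
  · rintro ⟨P₁, P₂, -, -, hP⟩
    exact ⟨_, isSafeSep_nbhd_support P₁ P₂ hP⟩
  · rintro ⟨S, -, a, b, -, -, hA, hB, hdisj⟩
    obtain ⟨P₁, hP₁, hP₁a⟩ := exists_isPath_of_mem_compOf (hA (.inl rfl)) (hA (.inr rfl))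
    obtain ⟨P₂, hP₂, hP₂b⟩ := exists_isPath_of_mem_compOf (hB (.inl rfl)) (hB (.inr rfl))
    exact ⟨P₁, P₂, hP₁, hP₂, fun x hx y hy =>
      ne_and_not_adj_of_disjoint_compOf hdisj (hP₁a x hx) (hP₂b y hy)⟩

theorem stmt18 (G : SimpleGraph V) (s₁ t₁ s₂ t₂ : V)
    (hdist : s₁ ≠ t₁ ∧ s₁ ≠ s₂ ∧ s₁ ≠ t₂ ∧ t₁ ≠ s₂ ∧ t₁ ≠ t₂ ∧ s₂ ≠ t₂)
    (hnadj : ∀ x ∈ ({s₁, t₁} : Set V), ∀ y ∈ ({s₂, t₂} : Set V), ¬ G.Adj x y) :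
    (∃ (P₁ : G.Walk s₁ t₁) (P₂ : G.Walk s₂ t₂), P₁.IsPath ∧ P₂.IsPath ∧
        ∀ x ∈ P₁.support, ∀ y ∈ P₂.support, x ≠ y ∧ ¬ G.Adj x y) ↔
      ∃ S : Set V, IsSafeSep G {s₁, t₁} {s₂, t₂} S :=
  stmt18_general G s₁ t₁ s₂ t₂
end
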